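/- Let E ⊆ ℝ^N be a measurable set such that for every x belonging to the set Ê of points of positive lower density of E, and every direction v in a fixed open cone C (nonempty open convex cone with vertex 0), the segment x + (0,η)v is contained in Ê for some fixed η > 0. Then the closure of Ê differs from Ê by a Lebesgue-null set. -/

import Mathlib

/-!
Since `C` is a cone, the segment condition upgrades to `Ê + C ⊆ Ê`, and since `C` is open this
passes to the closure: `x + C ⊆ Ê` for every `x ∈ closure Ê`. Hence every point `x` of
`closure Ê \ Ê` sees the whole cone `x + C` outside `closure Ê \ Ê`. Such a set has no Lebesgue
density points, because at a density point every rescaled copy `x + r • C` meets the set; so it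
is null.
-/

open MeasureTheory Filter Set

theorem add_mem_of_forall_add_smul_mem {V : Type*} [AddCommGroup V] [Module ℝ V]
    {S C : Set V} (hCcone : ∀ c : ℝ, 0 < c → ∀ v ∈ C, c • v ∈ C) {η : ℝ} (hη : 0 < η)
    (hS : ∀ x ∈ S, ∀ v ∈ C, ∀ s ∈ Ioo (0 : ℝ) η, x + s • v ∈ S)
    {x : V} (hx : x ∈ S) {v : V} (hv : v ∈ C) : x + v ∈ S := by
  have hη2 : (η / 2 : ℝ) ≠ 0 := by positivity
  have h := hS x hx _ (hCcone (η / 2)⁻¹ (by positivity) v hv) (η / 2) ⟨by linarith, by linarith⟩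
  rwa [smul_inv_smul₀ hη2] at h

theorem add_mem_of_mem_closure_of_forall_add_mem {G : Type*} [AddCommGroup G]
    [TopologicalSpace G] [ContinuousSub G] {S C : Set G} (hC : IsOpen C)
    (hS : ∀ y ∈ S, ∀ v ∈ C, y + v ∈ S) {x : G} (hx : x ∈ closure S) {v : G} (hv : v ∈ C) :
    x + v ∈ S := by
  have hU : IsOpen {y | x + v - y ∈ C} := hC.preimage (continuous_const.sub continuous_id)
  obtain ⟨y, hyv, hy⟩ := mem_closure_iff.1 hx _ hU (by simpa using hv)
  simpa using hS y hy _ hyv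

theorem MeasureTheory.Measure.addHaar_eq_zero_of_forall_add_notMem {E : Type*} [NormedAddCommGroup E]
    [NormedSpace ℝ E] [FiniteDimensional ℝ E] [MeasurableSpace E] [BorelSpace E]
    (μ : Measure E) [μ.IsAddHaarMeasure] {A C : Set E} (hCopen : IsOpen C) (hCne : C.Nonempty)
    (hCcone : ∀ c : ℝ, 0 < c → ∀ v ∈ C, c • v ∈ C) (hA : ∀ x ∈ A, ∀ v ∈ C, x + v ∉ A) :
    μ A = 0 := by
  by_contra hμA
  obtain ⟨x, hxA, hx⟩ :=
    Measure.exists_mem_of_measure_ne_zero_of_ae hμA (Besicovitch.ae_tendsto_measure_inter_div μ A)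
  obtain ⟨r, ⟨y, hyA, hy⟩, hr⟩ :=
    ((Measure.eventually_nonempty_inter_smul_of_density_one μ A x hx C hCopen.measurableSet
      (hCopen.measure_ne_zero μ hCne)).and self_mem_nhdsWithin).exists
  rw [singleton_add] at hy
  obtain ⟨_, ⟨v, hv, rfl⟩, rfl⟩ := hy
  exact hA x hxA _ (hCcone r hr v hv) hyA

theorem stmt12_general (N : ℕ)
    (Ehat : Set (EuclideanSpace ℝ (Fin N)))
    (C : Set (EuclideanSpace ℝ (Fin N))) (hCopen : IsOpen C)
    (hCne : C.Nonempty) (hCcone : ∀ (c : ℝ), 0 < c → ∀ v ∈ C, c • v ∈ C)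
    (η : ℝ) (hη : 0 < η)
    (hcone : ∀ x ∈ Ehat, ∀ v ∈ C, ∀ s ∈ Set.Ioo (0 : ℝ) η, x + s • v ∈ Ehat) :
    volume (closure Ehat \ Ehat) = 0 := by
  have hEhat_add : ∀ x ∈ Ehat, ∀ v ∈ C, x + v ∈ Ehat := fun x hx v hv =>
    add_mem_of_forall_add_smul_mem hCcone hη hcone hx hv
  refine Measure.addHaar_eq_zero_of_forall_add_notMem volume hCopen hCne hCcone ?_
  rintro x ⟨hx, -⟩ v hv ⟨-, hxv⟩
  exact hxv (add_mem_of_mem_closure_of_forall_add_mem hCopen hEhat_add hx hv)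

theorem stmt12 (N : ℕ) (E : Set (EuclideanSpace ℝ (Fin N))) (hE : MeasurableSet E)
    (Ehat : Set (EuclideanSpace ℝ (Fin N)))
    (hEhat : Ehat = {x | 0 < liminf
        (fun r => volume (E ∩ Metric.ball x r) / volume (Metric.ball x r))
        (nhdsWithin 0 (Set.Ioi 0))})
    (C : Set (EuclideanSpace ℝ (Fin N))) (hCopen : IsOpen C) (hCconv : Convex ℝ C)
    (hCne : C.Nonempty) (hCcone : ∀ (c : ℝ), 0 < c → ∀ v ∈ C, c • v ∈ C)
    (η : ℝ) (hη : 0 < η)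
    (hcone : ∀ x ∈ Ehat, ∀ v ∈ C, ∀ s ∈ Set.Ioo (0 : ℝ) η, x + s • v ∈ Ehat) :
    volume (closure Ehat \ Ehat) = 0 :=
  stmt12_general N Ehat C hCopen hCne hCcone η hη hcone
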